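/- arXiv:1612.03750 — 4 statements merged into one kernel-verified Lean document; each statement's English description precedes it below -/
import Mathlib

section
/- For a finitely supported function f : V → ℝ and a finitely supported skewsymmetric φ : E → ℝ, δ(f̄·φ)(x) = f(x)·δφ(x) - (1/(2c(x))) Σ_{e : e⁺ = x} r(e)·df(e)·φ(e), where f̄(e) = (f(e⁺)+f(e⁻))/2 is the mean value of f on the edge e. -/
open scoped BigOperators
open Function Filter

structure WGraph (V : Type*) where
  E : Set (V × V)
  symm : ∀ e ∈ E, (e.2, e.1) ∈ E
  noloop : ∀ v : V, (v, v) ∉ E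
  c : V → ℝ
  r : V × V → ℝ
  cpos : ∀ v, 0 < c v
  rpos : ∀ e, 0 < r e
  rsymm : ∀ e : V × V, r (e.2, e.1) = r e
  locfin : ∀ v : V, {e : V × V | e ∈ E ∧ e.1 = v}.Finite

variable {V : Type*}

/-- The difference operator `(df)(e) = f(e⁺) - f(e⁻)`. -/
def dOp (f : V → ℝ) : V × V → ℝ := fun e => f e.2 - f e.1

/-- The coboundary operator `(δφ)(x) = (1/c x) Σ_{e ∈ E, e⁺ = x} r e * φ e`. -/
noncomputable def deltaOp (G : WGraph V) (φ : V × V → ℝ) : V → ℝ :=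
  fun x => (G.c x)⁻¹ * ∑ᶠ e ∈ {e : V × V | e ∈ G.E ∧ e.2 = x}, G.r e * φ e

/-- Skewsymmetric function on oriented edges. -/
def Skew (φ : V × V → ℝ) : Prop := ∀ e : V × V, φ (e.2, e.1) = -φ e

/-- Finitely supported function. -/
def FinSupp {α β : Type*} [Zero β] (f : α → β) : Prop := (Function.support f).Finite

/-- Connectedness of a graph: any two vertices joined by a path of edges. -/
def WGraph.Connected (G : WGraph V) : Prop :=
  ∀ x y : V, ∃ n : ℕ, ∃ p : ℕ → V, p 0 = x ∧ p n = y ∧ ∀ i < n, (p i, p (i + 1)) ∈ G.E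

/-- Inner product on vertex functions: `Σ_x c x * f x * g x`. -/
noncomputable def innerV (G : WGraph V) (f g : V → ℝ) : ℝ := ∑ᶠ x : V, G.c x * (f x * g x)

/-- Inner product on edge functions: `(1/2) Σ_{e ∈ E} r e * φ e * ψ e`. -/
noncomputable def innerE (G : WGraph V) (φ ψ : V × V → ℝ) : ℝ :=
  (1 / 2) * ∑ᶠ e ∈ G.E, G.r e * (φ e * ψ e)

/-- Squared ℓ² norm of the pair `(f, φ)` restricted to vertices in `S` and edges in `T`. -/
noncomputable def sqnormOn (G : WGraph V) (S : Set V) (T : Set (V × V)) (f : V → ℝ)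
    (φ : V × V → ℝ) : ℝ :=
  (∑ᶠ x ∈ S, G.c x * f x ^ 2) + (1 / 2) * ∑ᶠ e ∈ T, G.r e * φ e ^ 2

/-- Edges of the subgraph induced by `K`. -/
def EK (G : WGraph V) (K : Set V) : Set (V × V) := {e ∈ G.E | e.1 ∈ K ∧ e.2 ∈ K}

/-- Edge boundary of `K`: edges with exactly one endpoint in `K`. -/
def edgeBdry (G : WGraph V) (K : Set V) : Set (V × V) :=
  {e ∈ G.E | (e.1 ∈ K ∧ e.2 ∉ K) ∨ (e.1 ∉ K ∧ e.2 ∈ K)}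

/-- `D = d + δ` is non-parabolic at infinity with respect to the finite subgraph on `K`. -/
noncomputable def NonParabolicAt (G : WGraph V) (K : Set V) : Prop :=
  ∀ VU : Set V, ∀ EU : Set (V × V), VU.Finite → EU.Finite →
    VU ⊆ Kᶜ → EU ⊆ G.E \ EK G K →
    ∃ C > 0, ∀ f : V → ℝ, ∀ φ : V × V → ℝ,
      FinSupp f → FinSupp φ → Skew φ →
      Function.support f ⊆ Kᶜ → Function.support φ ⊆ G.E \ EK G K →
      C * Real.sqrt (sqnormOn G VU EU f φ) ≤
        Real.sqrt (sqnormOn G Kᶜ (G.E \ EK G K) (deltaOp G φ) (dOp f))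

/-- `(Kt, Et)` is a (finite-subgraph) neighborhood of the subgraph on `K`. -/
def IsNbhd (G : WGraph V) (K Kt : Set V) (Et : Set (V × V)) : Prop :=
  Kt.Finite ∧ Et.Finite ∧ K ⊆ Kt ∧ EK G K ∪ edgeBdry G K ⊆ Et ∧ Et ⊆ G.E ∧
    ∀ e ∈ Et, e.1 ∈ Kt ∧ e.2 ∈ Kt

/-- Existence of a cycle in the graph. -/
def HasCycle (G : WGraph V) : Prop :=
  ∃ n : ℕ, 3 ≤ n ∧ ∃ p : ℕ → V, p n = p 0 ∧
    (∀ i j : ℕ, i < n → j < n → p i = p j → i = j) ∧ ∀ i < n, (p i, p (i + 1)) ∈ G.E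

/-- The outward edges of generation `m` in the two binary subtrees (`Ev` and `Bv` sides)
emanating from the vertex `x₀` of the triadic tree. -/
def genEdges (x₀ : V) (Ev Bv : ℕ → ℕ → V) : ℕ → Set (V × V)
  | 0 => {(x₀, Ev 0 0), (x₀, Bv 0 0)}
  | m + 1 => {p | ∃ k, k < 2 ^ (m + 1) ∧
      (p = (Ev m (k / 2), Ev (m + 1) k) ∨ p = (Bv m (k / 2), Bv (m + 1) k))}

/-- A set of oriented edges together with all reversed edges. -/
def symEdges (S : Set (V × V)) : Set (V × V) := {p | p ∈ S ∨ (p.2, p.1) ∈ S}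

/-- derivation property of δ with the mean value `f̄`. -/
theorem stmt3 (G : WGraph V) (f : V → ℝ) (φ : V × V → ℝ) (hf : FinSupp f)
    (hφ : FinSupp φ) (hs : Skew φ) (hsupp : Function.support φ ⊆ G.E) (x : V) :
    deltaOp G (fun e => (f e.2 + f e.1) / 2 * φ e) x =
      f x * deltaOp G φ x -
        (1 / (2 * G.c x)) *
          ∑ᶠ e ∈ {e : V × V | e ∈ G.E ∧ e.2 = x}, G.r e * dOp f e * φ e := by
  classical
  have hSfin : {e : V × V | e ∈ G.E ∧ e.2 = x}.Finite := by
    have hT := G.locfin x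
    have hsub : {e : V × V | e ∈ G.E ∧ e.2 = x} ⊆
        Prod.swap '' {e : V × V | e ∈ G.E ∧ e.1 = x} := by
      rintro ⟨a, b⟩ ⟨he, hb⟩
      exact ⟨(b, a), ⟨G.symm _ he, hb⟩, rfl⟩
    exact (hT.image _).subset hsub
  simp only [deltaOp]
  rw [← hSfin.coe_toFinset, finsum_mem_coe_finset, finsum_mem_coe_finset,
    finsum_mem_coe_finset]
  have hsum : ∑ e ∈ hSfin.toFinset, G.r e * ((f e.2 + f e.1) / 2 * φ e) =
      f x * ∑ e ∈ hSfin.toFinset, G.r e * φ e -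
        (1 / 2) * ∑ e ∈ hSfin.toFinset, G.r e * dOp f e * φ e := by
    rw [Finset.mul_sum, Finset.mul_sum, ← Finset.sum_sub_distrib]
    apply Finset.sum_congr rfl
    intro e he
    have hx : e.2 = x := (hSfin.mem_toFinset.mp he).2
    simp only [dOp, hx]
    ring
  rw [hsum]
  have hc : G.c x ≠ 0 := (G.cpos x).ne'
  field_simp
end

section
/- Suppose the Gauss–Bonnet operator D = d + δ is non-parabolic at infinity with respect to a finite subgraph G_K, and let G_K̃ be a neighborhood of G_K (a finite subgraph containing K, all edges of E_K together with the edge boundary ∂E_K, and all endpoints of its edges). Then for every finite subset U of G there is a constant C'(U) > 0 such that C'·‖(f,φ)‖_{ℓ²(U)} ≤ ‖D(f,φ)‖_{ℓ²(G)} + ‖(f,φ)‖_{ℓ²(G_K̃)} for all finitely supported f : V → ℝ and skewsymmetric φ : E → ℝ. -/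
open scoped BigOperators
open Function Filter

variable {V : Type*}

/-!
Cut `(f, φ)` off to `f' = 1_{Kᶜ} f` and `φ' = 1_{E ∖ E_K} φ`, to which non-parabolicity applies
with its constant `C` for `U ∖ G_K`. On `U` the pair `(f, φ)` differs from `(f', φ')` only inside
`G_K̃`. Moreover `δφ' = δφ` off `K`, and `df'` differs from `df` only on the finitely many edges
of `∂E_K`, by amounts bounded by the values of `f` on `K ⊆ K̃`. With
`M = Σ_{e ∈ ∂E_K} r(e) (1/c(e⁻) + 1/c(e⁺))` this gives
`C² ‖(f, φ)‖²_U ≤ (2 + 2M + C²) (‖D(f, φ)‖² + ‖(f, φ)‖²_{G_K̃})`.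
-/

open Set

section finsum

variable {α : Type*} {s t t₁ t₂ : Set α} {g h h₁ h₂ : α → ℝ}

lemma finsum_mem_nonneg (hg : ∀ a ∈ s, 0 ≤ g a) : 0 ≤ ∑ᶠ a ∈ s, g a :=
  finsum_nonneg fun a => finsum_nonneg fun ha => hg a ha

lemma finsum_mem_le_finsum_mem_add_finsum_mem (hg : ∀ a ∈ s, 0 ≤ g a)
    (hh₁ : ∀ a ∈ t₁, 0 ≤ h₁ a) (hh₂ : ∀ a ∈ t₂, 0 ≤ h₂ a)
    (ht₁ : (t₁ ∩ support h₁).Finite) (ht₂ : (t₂ ∩ support h₂).Finite)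
    (hle : ∀ a ∈ s, g a ≤ t₁.indicator h₁ a + t₂.indicator h₂ a) :
    ∑ᶠ a ∈ s, g a ≤ ∑ᶠ a ∈ t₁, h₁ a + ∑ᶠ a ∈ t₂, h₂ a := by
  have hi₁ : 0 ≤ t₁.indicator h₁ := indicator_nonneg hh₁
  have hi₂ : 0 ≤ t₂.indicator h₂ := indicator_nonneg hh₂
  have hf₁ : (support (t₁.indicator h₁)).Finite := by rwa [support_indicator]
  have hf₂ : (support (t₂.indicator h₂)).Finite := by rwa [support_indicator]
  have hfs : (support (t₁.indicator h₁ + t₂.indicator h₂)).Finite :=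
    (hf₁.union hf₂).subset (support_add _ _)
  have hle' : s.indicator g ≤ t₁.indicator h₁ + t₂.indicator h₂ := by
    intro a
    by_cases ha : a ∈ s
    · rw [indicator_of_mem ha]; exact hle a ha
    · rw [indicator_of_notMem ha]; exact add_nonneg (hi₁ a) (hi₂ a)
  have hfg : (support (s.indicator g)).Finite := by
    refine hfs.subset fun a ha => (lt_of_lt_of_le ?_ (hle' a)).ne'
    exact lt_of_le_of_ne (indicator_nonneg hg a) (Ne.symm ha)
  rw [finsum_mem_def, finsum_mem_def, finsum_mem_def, ← finsum_add_distrib hf₁ hf₂]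
  exact finsum_le_finsum' hfg hfs hle'

lemma finsum_mem_le_finsum_mem_of_le (hg : ∀ a ∈ s, 0 ≤ g a) (hh : ∀ a ∈ t, 0 ≤ h a)
    (ht : (t ∩ support h).Finite) (hle : ∀ a ∈ s, g a ≤ t.indicator h a) :
    ∑ᶠ a ∈ s, g a ≤ ∑ᶠ a ∈ t, h a := by
  simpa using finsum_mem_le_finsum_mem_add_finsum_mem (t₂ := ∅) (h₂ := 0) hg hh
    (fun _ _ => le_rfl) ht (by simp) (by simpa using hle)

lemma le_finsum_mem_of_mem {a : α} (ha : a ∈ t) (hh : ∀ a ∈ t, 0 ≤ h a) (ht : t.Finite) :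
    h a ≤ ∑ᶠ b ∈ t, h b := by
  simpa using finsum_mem_le_finsum_mem_of_le (s := {a}) (by simpa using hh a ha) hh
    (ht.inter_of_left _) (by simp [indicator_of_mem ha])

lemma finsum_mem_mul_sq_le_add {s' s₂ : Set α} {w g' : α → ℝ}
    (hw : ∀ a, 0 ≤ w a) (hs' : s'.Finite) (hs₂ : s₂.Finite)
    (h : ∀ a ∈ s, a ∉ s₂ → a ∈ s' ∧ g a = g' a) :
    ∑ᶠ a ∈ s, w a * g a ^ 2 ≤ ∑ᶠ a ∈ s', w a * g' a ^ 2 + ∑ᶠ a ∈ s₂, w a * g a ^ 2 := by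
  have hnn : ∀ (u : α → ℝ) a, 0 ≤ w a * u a ^ 2 := fun u a => mul_nonneg (hw a) (sq_nonneg _)
  refine finsum_mem_le_finsum_mem_add_finsum_mem (fun a _ => hnn g a) (fun a _ => hnn g' a)
    (fun a _ => hnn g a) (hs'.inter_of_left _) (hs₂.inter_of_left _) fun a ha => ?_
  by_cases ha₂ : a ∈ s₂
  · rw [indicator_of_mem ha₂]
    exact le_add_of_nonneg_left (indicator_nonneg (fun a _ => hnn g' a) a)
  · obtain ⟨ha', hga⟩ := h a ha ha₂
    rw [indicator_of_mem ha', indicator_of_notMem ha₂, hga, add_zero]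

end finsum

lemma sq_mul_le_of_mul_sqrt_le_sqrt {a b C : ℝ} (hC : 0 ≤ C) (ha : 0 ≤ a) (hb : 0 ≤ b)
    (h : C * √a ≤ √b) : C ^ 2 * a ≤ b := by
  have := pow_le_pow_left₀ (by positivity) h 2
  rwa [mul_pow, Real.sq_sqrt ha, Real.sq_sqrt hb] at this

lemma mul_sqrt_le_sqrt_add_sqrt {a b c C L : ℝ} (hL : 0 < L) (ha : 0 ≤ a)
    (hb : 0 ≤ b) (hc : 0 ≤ c) (h : C ^ 2 * a ≤ L * (b + c)) :
    C / √L * √a ≤ √b + √c := by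
  rw [div_mul_eq_mul_div, div_le_iff₀ (Real.sqrt_pos.2 hL)]
  refine le_of_pow_le_pow_left₀ two_ne_zero (by positivity) ?_
  rw [mul_pow, mul_pow, Real.sq_sqrt ha, Real.sq_sqrt hL.le]
  nlinarith [Real.sq_sqrt hb, Real.sq_sqrt hc, mul_nonneg (Real.sqrt_nonneg b) (Real.sqrt_nonneg c)]

section graph

variable (G : WGraph V)

lemma WGraph.finite_incident {S : Set V} (hS : S.Finite) :
    {e : V × V | e ∈ G.E ∧ (e.1 ∈ S ∨ e.2 ∈ S)}.Finite := by
  have hin : ∀ v, {e : V × V | e ∈ G.E ∧ e.2 = v}.Finite := fun v =>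
    ((G.locfin v).image Prod.swap).subset fun e he =>
      ⟨e.swap, ⟨G.symm e he.1, he.2⟩, Prod.swap_swap e⟩
  refine ((hS.biUnion fun v _ => G.locfin v).union (hS.biUnion fun v _ => hin v)).subset ?_
  rintro e ⟨he, h1 | h2⟩
  · exact Or.inl (mem_biUnion h1 ⟨he, rfl⟩)
  · exact Or.inr (mem_biUnion h2 ⟨he, rfl⟩)

lemma finite_edgeBdry {K : Set V} (hK : K.Finite) : (edgeBdry G K).Finite :=
  (G.finite_incident hK).subset fun _ ⟨he, h⟩ => ⟨he, by tauto⟩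

lemma finite_inter_support_dOp {f : V → ℝ} (hf : (support f).Finite) :
    (G.E ∩ support (dOp f)).Finite := by
  refine (G.finite_incident hf).subset fun e ⟨he, hd⟩ => ⟨he, ?_⟩
  by_contra! h
  simp_all [dOp]

lemma support_deltaOp_subset (φ : V × V → ℝ) :
    support (deltaOp G φ) ⊆ Prod.snd '' support φ := by
  intro x hx
  by_contra hc
  refine hx ?_
  rw [deltaOp, finsum_mem_eq_zero_of_forall_eq_zero, mul_zero]
  rintro e ⟨-, rfl⟩
  rw [show φ e = 0 by by_contra h; exact hc ⟨e, h, rfl⟩, mul_zero]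

lemma swap_mem_diff_EK {K : Set V} {e : V × V} (he : e ∈ G.E \ EK G K) :
    (e.2, e.1) ∈ G.E \ EK G K :=
  ⟨G.symm e he.1, fun h => he.2 ⟨he.1, h.2.2, h.2.1⟩⟩

lemma Skew.indicator {φ : V × V → ℝ} (hφ : Skew φ) {D : Set (V × V)}
    (hD : ∀ e ∈ D, (e.2, e.1) ∈ D) : Skew (D.indicator φ) := by
  intro e
  by_cases he : e ∈ D
  · rw [indicator_of_mem he, indicator_of_mem (hD e he), hφ]
  · have hs : (e.2, e.1) ∉ D := fun h => he (hD _ h)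
    rw [indicator_of_notMem he, indicator_of_notMem hs, neg_zero]

lemma deltaOp_indicator_diff_EK {K : Set V} (φ : V × V → ℝ) {x : V} (hx : x ∉ K) :
    deltaOp G ((G.E \ EK G K).indicator φ) x = deltaOp G φ x := by
  refine congrArg _ (finsum_mem_congr rfl fun e he => ?_)
  rw [indicator_of_mem (show e ∈ G.E \ EK G K from ⟨he.1, fun h => hx (he.2 ▸ h.2.2)⟩)]

lemma sqnormOn_nonneg (S : Set V) (T : Set (V × V)) (f : V → ℝ) (φ : V × V → ℝ) :
    0 ≤ sqnormOn G S T f φ :=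
  add_nonneg (finsum_mem_nonneg fun x _ => mul_nonneg (G.cpos x).le (sq_nonneg _))
    (mul_nonneg (by norm_num) (finsum_mem_nonneg fun e _ => mul_nonneg (G.rpos e).le (sq_nonneg _)))

lemma sqnormOn_le_add {S S' S₂ : Set V} {T T' T₂ : Set (V × V)} {f f' : V → ℝ}
    {φ φ' : V × V → ℝ} (hS' : S'.Finite) (hT' : T'.Finite) (hS₂ : S₂.Finite)
    (hT₂ : T₂.Finite) (hf : ∀ x ∈ S, x ∉ S₂ → x ∈ S' ∧ f x = f' x)
    (hφ : ∀ e ∈ T, e ∉ T₂ → e ∈ T' ∧ φ e = φ' e) :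
    sqnormOn G S T f φ ≤ sqnormOn G S' T' f' φ' + sqnormOn G S₂ T₂ f φ := by
  have hV := finsum_mem_mul_sq_le_add (fun x => (G.cpos x).le) hS' hS₂ hf
  have hE := finsum_mem_mul_sq_le_add (fun e => (G.rpos e).le) hT' hT₂ hφ
  simp only [sqnormOn]
  linarith

noncomputable def bdryWeight (K : Set V) : ℝ :=
  ∑ᶠ e ∈ edgeBdry G K, G.r e * ((G.c e.1)⁻¹ + (G.c e.2)⁻¹)

lemma bdryWeight_nonneg (K : Set V) : 0 ≤ bdryWeight G K :=
  finsum_mem_nonneg fun e _ => by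
    have := G.rpos e; have := G.cpos e.1; have := G.cpos e.2; positivity

lemma sq_indicator_le {K S : Set V} (hS : S.Finite) (hKS : K ⊆ S) (f : V → ℝ) (x : V) :
    K.indicator f x ^ 2 ≤ (G.c x)⁻¹ * ∑ᶠ y ∈ S, G.c y * f y ^ 2 := by
  have hnn : ∀ y ∈ S, 0 ≤ G.c y * f y ^ 2 := fun y _ => mul_nonneg (G.cpos y).le (sq_nonneg _)
  by_cases hx : x ∈ K
  · rw [indicator_of_mem hx, le_inv_mul_iff₀ (G.cpos x)]
    exact le_finsum_mem_of_mem (hKS hx) hnn hS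
  · rw [indicator_of_notMem hx, sq, mul_zero]
    exact mul_nonneg (inv_nonneg.2 (G.cpos x).le) (finsum_mem_nonneg hnn)

lemma finsum_sq_dOp_indicator_compl_le {K S : Set V} (hK : K.Finite) (hS : S.Finite)
    (hKS : K ⊆ S) {f : V → ℝ} (hf : (support f).Finite) :
    ∑ᶠ e ∈ G.E \ EK G K, G.r e * dOp (Kᶜ.indicator f) e ^ 2 ≤
      2 * ∑ᶠ e ∈ G.E, G.r e * dOp f e ^ 2 +
        4 * bdryWeight G K * ∑ᶠ x ∈ S, G.c x * f x ^ 2 := by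
  set Q := ∑ᶠ x ∈ S, G.c x * f x ^ 2
  have hQ : 0 ≤ Q := finsum_mem_nonneg fun y _ => mul_nonneg (G.cpos y).le (sq_nonneg _)
  have hle : ∀ e ∈ G.E \ EK G K, G.r e * dOp (Kᶜ.indicator f) e ^ 2 ≤
      G.E.indicator (fun e => 2 * (G.r e * dOp f e ^ 2)) e +
        (edgeBdry G K).indicator (fun e => G.r e * ((G.c e.1)⁻¹ + (G.c e.2)⁻¹) * (4 * Q)) e := by
    intro e he
    have hr := (G.rpos e).le
    have hd : dOp (Kᶜ.indicator f) e = dOp f e - dOp (K.indicator f) e := by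
      simp only [dOp, indicator_compl, Pi.sub_apply]; ring
    rw [indicator_of_mem he.1, hd]
    by_cases hb : e ∈ edgeBdry G K
    · have h₁ := sq_indicator_le G hS hKS f e.1
      have h₂ := sq_indicator_le G hS hKS f e.2
      rw [indicator_of_mem hb]
      simp only [dOp] at h₁ h₂ ⊢
      set a := f e.2 - f e.1
      set b₁ := K.indicator f e.1
      set b₂ := K.indicator f e.2
      calc G.r e * (a - (b₂ - b₁)) ^ 2 ≤ G.r e * (2 * a ^ 2 + 4 * b₁ ^ 2 + 4 * b₂ ^ 2) :=
            mul_le_mul_of_nonneg_left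
              (by nlinarith [sq_nonneg (a + (b₂ - b₁)), sq_nonneg (b₁ + b₂)]) hr
        _ ≤ G.r e * (2 * a ^ 2 + 4 * ((G.c e.1)⁻¹ * Q) + 4 * ((G.c e.2)⁻¹ * Q)) := by gcongr
        _ = _ := by ring
    · have h₁ : e.1 ∉ K := fun h => hb ⟨he.1, Or.inl ⟨h, fun h' => he.2 ⟨he.1, h, h'⟩⟩⟩
      have h₂ : e.2 ∉ K := fun h => hb ⟨he.1, Or.inr ⟨h₁, h⟩⟩
      rw [indicator_of_notMem hb]
      simp only [dOp, indicator_of_notMem h₁, indicator_of_notMem h₂, sub_zero, add_zero]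
      nlinarith [mul_nonneg hr (sq_nonneg (f e.2 - f e.1))]
  have hfin : (G.E ∩ support fun e => 2 * (G.r e * dOp f e ^ 2)).Finite :=
    (finite_inter_support_dOp G hf).subset fun e ⟨he, h⟩ => ⟨he, fun h0 => h (by simp [h0])⟩
  have hbd := finsum_mem_le_finsum_mem_add_finsum_mem
    (fun e _ => mul_nonneg (G.rpos e).le (sq_nonneg _))
    (fun e _ => mul_nonneg zero_le_two (mul_nonneg (G.rpos e).le (sq_nonneg _)))
    (fun e _ => by have := G.rpos e; have := G.cpos e.1; have := G.cpos e.2; positivity)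
    hfin ((finite_edgeBdry G hK).inter_of_left _) hle
  rwa [← mul_finsum_mem, ← finsum_mem_mul, ← bdryWeight, mul_left_comm, ← mul_assoc] at hbd

lemma sqnormOn_D_indicator_le {K S : Set V} (hK : K.Finite) (hS : S.Finite) (hKS : K ⊆ S)
    (T : Set (V × V)) {f : V → ℝ} {φ : V × V → ℝ} (hf : (support f).Finite)
    (hφ : (support φ).Finite) :
    sqnormOn G Kᶜ (G.E \ EK G K) (deltaOp G ((G.E \ EK G K).indicator φ))
        (dOp (Kᶜ.indicator f)) ≤
      2 * sqnormOn G univ G.E (deltaOp G φ) (dOp f) + 2 * bdryWeight G K * sqnormOn G S T f φ := by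
  have hδ : ∑ᶠ x ∈ Kᶜ, G.c x * deltaOp G ((G.E \ EK G K).indicator φ) x ^ 2 ≤
      ∑ᶠ x ∈ univ, G.c x * deltaOp G φ x ^ 2 := by
    refine finsum_mem_le_finsum_mem_of_le (fun x _ => mul_nonneg (G.cpos x).le (sq_nonneg _))
      (fun x _ => mul_nonneg (G.cpos x).le (sq_nonneg _)) ?_ fun x hx => ?_
    · refine ((hφ.image Prod.snd).subset (support_deltaOp_subset G φ)).subset ?_
      rintro x ⟨-, hx⟩ h0
      simp [h0] at hx
    · rw [indicator_of_mem (mem_univ x), deltaOp_indicator_diff_EK G φ hx]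
  have hd := finsum_sq_dOp_indicator_compl_le G hK hS hKS hf
  have hE : 0 ≤ ∑ᶠ e ∈ T, G.r e * φ e ^ 2 :=
    finsum_mem_nonneg fun e _ => mul_nonneg (G.rpos e).le (sq_nonneg _)
  have hV : 0 ≤ ∑ᶠ x ∈ univ, G.c x * deltaOp G φ x ^ 2 :=
    finsum_mem_nonneg fun x _ => mul_nonneg (G.cpos x).le (sq_nonneg _)
  have hM := bdryWeight_nonneg G K
  simp only [sqnormOn]
  nlinarith [mul_nonneg hM hE]

end graph

theorem stmt6_general (G : WGraph V) (K : Set V)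
    (hK : K.Finite) (hNP : NonParabolicAt G K) (Kt : Set V) (Et : Set (V × V))
    (hN : IsNbhd G K Kt Et) (VU : Set V) (EU : Set (V × V)) (hVU : VU.Finite)
    (hEU : EU.Finite) (hEUE : EU ⊆ G.E) :
    ∃ C > 0, ∀ f : V → ℝ, ∀ φ : V × V → ℝ,
      FinSupp f → FinSupp φ → Skew φ → Function.support φ ⊆ G.E →
      C * Real.sqrt (sqnormOn G VU EU f φ) ≤
        Real.sqrt (sqnormOn G Set.univ G.E (deltaOp G φ) (dOp f)) +
          Real.sqrt (sqnormOn G Kt Et f φ) := by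
  obtain ⟨hKt, hEt, hKKt, hEKEt, -, -⟩ := hN
  set D := G.E \ EK G K
  obtain ⟨C, hC, hNPC⟩ := hNP (VU ∩ Kᶜ) (EU ∩ D) (hVU.inter_of_left _) (hEU.inter_of_left _)
    inter_subset_right inter_subset_right
  have hM := bdryWeight_nonneg G K
  set L := 2 + 2 * bdryWeight G K + C ^ 2
  refine ⟨C / √L, by positivity, fun f φ hf hφ hskew _ => ?_⟩
  have hsplit : sqnormOn G VU EU f φ ≤
      sqnormOn G (VU ∩ Kᶜ) (EU ∩ D) (Kᶜ.indicator f) (D.indicator φ) + sqnormOn G Kt Et f φ := by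
    refine sqnormOn_le_add G (hVU.inter_of_left _) (hEU.inter_of_left _) hKt hEt
      (fun x hx hxt => ?_) (fun e he het => ?_)
    · have hxK : x ∈ Kᶜ := fun h => hxt (hKKt h)
      exact ⟨⟨hx, hxK⟩, (indicator_of_mem hxK f).symm⟩
    · have heD : e ∈ D := ⟨hEUE he, fun h => het (hEKEt (Or.inl h))⟩
      exact ⟨⟨he, heD⟩, (indicator_of_mem heD φ).symm⟩
  have hcut := sq_mul_le_of_mul_sqrt_le_sqrt hC.le (sqnormOn_nonneg G _ _ _ _) (sqnormOn_nonneg G _ _ _ _) <|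
    hNPC (Kᶜ.indicator f) (D.indicator φ)
      ((hf.inter_of_right _).subset support_indicator.subset)
      ((hφ.inter_of_right _).subset support_indicator.subset)
      (hskew.indicator fun e he => swap_mem_diff_EK G he)
      support_indicator_subset support_indicator_subset
  have hbdry := sqnormOn_D_indicator_le G hK hKt hKKt Et hf hφ
  have hQD := sqnormOn_nonneg G univ G.E (deltaOp G φ) (dOp f)
  have hQt := sqnormOn_nonneg G Kt Et f φ
  refine mul_sqrt_le_sqrt_add_sqrt (by positivity) (sqnormOn_nonneg G _ _ _ _) hQD hQt ?_
  nlinarith [mul_nonneg hM hQD, mul_nonneg (sq_nonneg C) hQD]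

theorem stmt6 (G : WGraph V) [Infinite V] (hconn : G.Connected) (K : Set V)
    (hK : K.Finite) (hNP : NonParabolicAt G K) (Kt : Set V) (Et : Set (V × V))
    (hN : IsNbhd G K Kt Et) (VU : Set V) (EU : Set (V × V)) (hVU : VU.Finite)
    (hEU : EU.Finite) (hEUE : EU ⊆ G.E) :
    ∃ C > 0, ∀ f : V → ℝ, ∀ φ : V × V → ℝ,
      FinSupp f → FinSupp φ → Skew φ → Function.support φ ⊆ G.E →
      C * Real.sqrt (sqnormOn G VU EU f φ) ≤
        Real.sqrt (sqnormOn G Set.univ G.E (deltaOp G φ) (dOp f)) +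
          Real.sqrt (sqnormOn G Kt Et f φ) :=
  stmt6_general G K hK hNP Kt Et hN VU EU hVU hEU hEUE
end

section
/- The map N_K̃(f,φ) = (‖(f,φ)‖²_{ℓ²(G_K̃)} + ‖D(f,φ)‖²_{ℓ²(G)})^{1/2} is a norm on finitely supported pairs (f,φ), provided D is non-parabolic at infinity with respect to G_K and G_K̃ is a neighborhood of G_K. In particular, N_K̃(f,φ) = 0 implies f = 0 on V and φ = 0 on E. -/
open scoped BigOperators
open Function Filter

variable {V : Type*}

section Aux

variable {α : Type*}

/-- finsum over a set of nonneg terms is nonneg. -/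
lemma finsum_mem_nonneg' (g : α → ℝ) (S : Set α) (hnn : ∀ a ∈ S, 0 ≤ g a) :
    0 ≤ ∑ᶠ a ∈ S, g a := by
  rw [finsum_mem_def]
  refine finsum_nonneg fun a => ?_
  by_cases h : a ∈ S
  · rw [Set.indicator_of_mem h]; exact hnn a h
  · rw [Set.indicator_of_notMem h]

/-- If a finsum of nonneg terms over a set (finite intersection with support) is zero,
each term vanishes. -/
lemma finsum_mem_eq_zero (g : α → ℝ) (S : Set α) (hfin : (S ∩ Function.support g).Finite)
    (hnn : ∀ a ∈ S, 0 ≤ g a) (hz : ∑ᶠ a ∈ S, g a = 0) : ∀ a ∈ S, g a = 0 := by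
  rw [finsum_mem_eq_sum g hfin] at hz
  have h := (Finset.sum_eq_zero_iff_of_nonneg ?_).1 hz
  · intro a ha
    by_contra hne
    exact hne (h a (hfin.mem_toFinset.2 ⟨ha, hne⟩))
  · intro a ha
    exact hnn a (hfin.mem_toFinset.1 ha).1

lemma edges_touching_finite {V : Type*} (G : WGraph V) (S : Set V) (hS : S.Finite) :
    {e : V × V | e ∈ G.E ∧ (e.1 ∈ S ∨ e.2 ∈ S)}.Finite := by
  have h1 : (⋃ v ∈ S, {e : V × V | e ∈ G.E ∧ e.1 = v}).Finite :=
    hS.biUnion fun v _ => G.locfin v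
  have h2 : (⋃ v ∈ S, {e : V × V | e ∈ G.E ∧ e.2 = v}).Finite := by
    refine hS.biUnion fun v _ => ?_
    refine Set.Finite.subset ((G.locfin v).image Prod.swap) ?_
    rintro ⟨a, b⟩ ⟨he, rfl⟩
    exact ⟨(b, a), ⟨G.symm _ he, rfl⟩, rfl⟩
  refine (h1.union h2).subset ?_
  rintro e ⟨he, hv | hv⟩
  · exact Or.inl (Set.mem_biUnion hv ⟨he, rfl⟩)
  · exact Or.inr (Set.mem_biUnion hv ⟨he, rfl⟩)

end Aux

/-- `N_K̃` is a norm; in particular `N_K̃(f,φ) = 0` implies `f = 0` and `φ = 0`. -/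
theorem stmt8 (G : WGraph V) [Infinite V] (hconn : G.Connected) (K : Set V)
    (hK : K.Finite) (hNP : NonParabolicAt G K) (Kt : Set V) (Et : Set (V × V))
    (hN : IsNbhd G K Kt Et) (f : V → ℝ) (φ : V × V → ℝ) (hf : FinSupp f)
    (hφ : FinSupp φ) (hs : Skew φ) (hE : Function.support φ ⊆ G.E)
    (hzero : Real.sqrt (sqnormOn G Kt Et f φ +
      sqnormOn G Set.univ G.E (deltaOp G φ) (dOp f)) = 0) :
    f = 0 ∧ φ = 0 := by
  -- nonnegativity of the four pieces
  have hAv : 0 ≤ ∑ᶠ x ∈ Kt, G.c x * f x ^ 2 :=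
    finsum_mem_nonneg' _ _ fun x _ => mul_nonneg (G.cpos x).le (sq_nonneg _)
  have hAe : 0 ≤ ∑ᶠ e ∈ Et, G.r e * φ e ^ 2 :=
    finsum_mem_nonneg' _ _ fun e _ => mul_nonneg (G.rpos e).le (sq_nonneg _)
  have hBv : 0 ≤ ∑ᶠ x ∈ (Set.univ : Set V), G.c x * (deltaOp G φ) x ^ 2 :=
    finsum_mem_nonneg' _ _ fun x _ => mul_nonneg (G.cpos x).le (sq_nonneg _)
  have hBe : 0 ≤ ∑ᶠ e ∈ G.E, G.r e * (dOp f) e ^ 2 :=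
    finsum_mem_nonneg' _ _ fun e _ => mul_nonneg (G.rpos e).le (sq_nonneg _)
  have hA : 0 ≤ sqnormOn G Kt Et f φ := by
    unfold sqnormOn; positivity
  have hB : 0 ≤ sqnormOn G Set.univ G.E (deltaOp G φ) (dOp f) := by
    unfold sqnormOn; positivity
  have htot : sqnormOn G Kt Et f φ + sqnormOn G Set.univ G.E (deltaOp G φ) (dOp f) = 0 := by
    have := Real.sqrt_eq_zero'.1 hzero
    linarith
  have hA0 : sqnormOn G Kt Et f φ = 0 := by linarith
  have hB0 : sqnormOn G Set.univ G.E (deltaOp G φ) (dOp f) = 0 := by linarith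
  unfold sqnormOn at hA0 hB0
  have hAe0 : ∑ᶠ e ∈ Et, G.r e * φ e ^ 2 = 0 := by linarith
  have hBv0 : ∑ᶠ x ∈ (Set.univ : Set V), G.c x * (deltaOp G φ) x ^ 2 = 0 := by linarith
  have hBe0 : ∑ᶠ e ∈ G.E, G.r e * (dOp f) e ^ 2 = 0 := by linarith
  -- φ vanishes on Et
  have hφEt : ∀ e ∈ Et, φ e = 0 := by
    intro e he
    have := finsum_mem_eq_zero (fun e => G.r e * φ e ^ 2) Et
      (hN.2.1.inter_of_left _)
      (fun e _ => mul_nonneg (G.rpos e).le (sq_nonneg _)) hAe0 e he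
    have h2 : G.r e * φ e ^ 2 = 0 := this
    exact pow_eq_zero_iff two_ne_zero |>.1 ((mul_eq_zero.1 h2).resolve_left (G.rpos e).ne')
  -- dOp f vanishes on G.E
  have hdf : ∀ e ∈ G.E, dOp f e = 0 := by
    intro e he
    have hfin : (G.E ∩ Function.support (fun e => G.r e * (dOp f) e ^ 2)).Finite := by
      refine (edges_touching_finite G (Function.support f) hf).subset ?_
      rintro e ⟨he, hsupp⟩
      refine ⟨he, ?_⟩
      by_contra hcon
      push_neg at hcon
      simp only [Function.mem_support, not_not] at hcon
      apply hsupp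
      simp [dOp, hcon.1, hcon.2]
    have := finsum_mem_eq_zero _ G.E hfin
      (fun e _ => mul_nonneg (G.rpos e).le (sq_nonneg _)) hBe0 e he
    have h2 : G.r e * dOp f e ^ 2 = 0 := this
    exact pow_eq_zero_iff two_ne_zero |>.1 ((mul_eq_zero.1 h2).resolve_left (G.rpos e).ne')
  -- deltaOp φ vanishes everywhere
  have hδ : ∀ x, deltaOp G φ x = 0 := by
    have hsupp : Function.support (fun x => G.c x * (deltaOp G φ) x ^ 2) ⊆
        Prod.snd '' Function.support φ := by
      intro x hx
      by_contra hcon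
      apply hx
      have hz : deltaOp G φ x = 0 := by
        unfold deltaOp
        rw [finsum_mem_of_eqOn_zero, mul_zero]
        rintro ⟨a, b⟩ ⟨heE, heq⟩
        have : φ (a, b) = 0 := by
          by_contra hne
          exact hcon ⟨(a, b), hne, heq⟩
        simp [this]
      simp [hz]
    intro x
    have hfin : ((Set.univ : Set V) ∩
        Function.support (fun x => G.c x * (deltaOp G φ) x ^ 2)).Finite :=
      ((hφ.image Prod.snd).subset hsupp).subset Set.inter_subset_right
    have := finsum_mem_eq_zero _ Set.univ hfin
      (fun x _ => mul_nonneg (G.cpos x).le (sq_nonneg _)) hBv0 x (Set.mem_univ x)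
    have h2 : G.c x * deltaOp G φ x ^ 2 = 0 := this
    exact pow_eq_zero_iff two_ne_zero |>.1 ((mul_eq_zero.1 h2).resolve_left (G.cpos x).ne')
  -- f is constant, hence zero
  have hconst : ∀ x y, f x = f y := by
    intro x y
    obtain ⟨n, p, hp0, hpn, hpE⟩ := hconn x y
    have key : ∀ i ≤ n, f (p i) = f (p 0) := by
      intro i hi
      induction i with
      | zero => rfl
      | succ j ih =>
        have hj : j ≤ n := Nat.le_of_succ_le hi
        have hEj := hpE j (Nat.lt_of_succ_le hi)
        have := hdf _ hEj
        simp only [dOp] at this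
        rw [show f (p (j + 1)) = f (p j) by linarith, ih hj]
    rw [← hp0, ← hpn]
    exact (key n le_rfl).symm
  have hf0 : f = 0 := by
    obtain ⟨v, hv⟩ := (hf.infinite_compl).nonempty
    funext x
    have : f v = 0 := by simpa using hv
    rw [Pi.zero_apply, hconst x v, this]
  refine ⟨hf0, ?_⟩
  -- support of φ avoids EK
  have hsuppφ : Function.support φ ⊆ G.E \ EK G K := by
    intro e he
    refine ⟨hE he, fun hEK => ?_⟩
    exact he (hφEt e (hN.2.2.2.1 (Or.inl hEK)))
  -- apply non-parabolicity with (0, φ)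
  obtain ⟨C, hC, hineq⟩ := hNP ∅ (Function.support φ) (Set.finite_empty) hφ
    (Set.empty_subset _) hsuppφ
  have h0supp : FinSupp (fun _ : V => (0 : ℝ)) := by
    simp [FinSupp, Function.support]
  have hle := hineq (fun _ => 0) φ h0supp hφ hs
    (by simp [Function.support]) hsuppφ
  have hRHS : sqnormOn G Kᶜ (G.E \ EK G K) (deltaOp G φ) (dOp fun _ => 0) = 0 := by
    unfold sqnormOn
    rw [finsum_mem_of_eqOn_zero (fun x _ => by simp [hδ x]),
      finsum_mem_of_eqOn_zero (fun e _ => by simp [dOp]), mul_zero, add_zero]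
  rw [hRHS, Real.sqrt_zero] at hle
  have hsq : Real.sqrt (sqnormOn G ∅ (Function.support φ) (fun _ => 0) φ) = 0 := by
    have h1 : 0 ≤ Real.sqrt (sqnormOn G ∅ (Function.support φ) (fun _ => 0) φ) :=
      Real.sqrt_nonneg _
    nlinarith
  have hQ : sqnormOn G ∅ (Function.support φ) (fun _ => 0) φ ≤ 0 :=
    Real.sqrt_eq_zero'.1 hsq
  have hQ' : sqnormOn G ∅ (Function.support φ) (fun _ => 0) φ =
      (1 / 2) * ∑ᶠ e ∈ Function.support φ, G.r e * φ e ^ 2 := by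
    unfold sqnormOn
    rw [finsum_mem_empty, zero_add]
  have hsum0 : ∑ᶠ e ∈ Function.support φ, G.r e * φ e ^ 2 = 0 := by
    have hnn : 0 ≤ ∑ᶠ e ∈ Function.support φ, G.r e * φ e ^ 2 :=
      finsum_mem_nonneg' _ _ fun e _ => mul_nonneg (G.rpos e).le (sq_nonneg _)
    rw [hQ'] at hQ
    linarith
  funext e
  rw [Pi.zero_apply]
  by_contra hne
  have := finsum_mem_eq_zero (fun e => G.r e * φ e ^ 2) (Function.support φ)
    (hφ.inter_of_left _)
    (fun e _ => mul_nonneg (G.rpos e).le (sq_nonneg _)) hsum0 e hne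
  have h2 : G.r e * φ e ^ 2 = 0 := this
  exact hne (pow_eq_zero_iff two_ne_zero |>.1 ((mul_eq_zero.1 h2).resolve_left (G.rpos e).ne'))
end

section
/- Let G_K̃₀ ⊂ G_K̃₁ be two finite neighborhoods of G_K. Then the norms N_K̃₀ and N_K̃₁ (where N_K̃(f,φ)² = ‖(f,φ)‖²_{ℓ²(G_K̃)} + ‖D(f,φ)‖²_{ℓ²(G)}) are equivalent on the space of finitely supported pairs (f,φ): there is C > 0 with N_K̃₀ ≤ N_K̃₁ ≤ C·N_K̃₀. -/
open scoped BigOperators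
open Function Filter

variable {V : Type*}

/-!
Write `N₁² = N₀² + X`, where `X` is the ℓ² mass of `(f, φ)` on the finite difference
`(Kt1 \ Kt0, Et1 \ Et0)`, which lies away from `K`. Non-parabolicity at infinity bounds `X` by
the norm of `D` applied to the cut-off pair `(1_{Kᶜ} f, 1_{E \ E_K} φ)`. The cut-off does not
change `δφ` off `K`, nor `df` on edges with both endpoints off `K`; on the finitely many boundary
edges `d(1_{Kᶜ} f)` only sees values of `f` on `Kt0`, hence is bounded by `N₀`.
-/

open Set

section Finsum

variable {α M : Type*} [AddCommMonoid M] [PartialOrder M] [IsOrderedAddMonoid M]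
  {s t : Set α} {f g : α → M}

lemma finsum_mem_nonneg_s9 (h : ∀ i ∈ s, 0 ≤ f i) : 0 ≤ ∑ᶠ i ∈ s, f i :=
  finsum_nonneg fun i => finsum_nonneg (h i)

lemma finsum_mem_le_finsum_mem_of_subset (hst : s ⊆ t) (hf : ∀ i ∈ t, 0 ≤ f i)
    (ht : (t ∩ support f).Finite) : ∑ᶠ i ∈ s, f i ≤ ∑ᶠ i ∈ t, f i := by
  rw [← finsum_mem_add_sdiff' hst ht]
  exact le_add_of_nonneg_right (finsum_mem_nonneg_s9 fun i hi => hf i hi.1)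

lemma finsum_mem_le_finsum_mem (hs : s.Finite) (h : ∀ i ∈ s, f i ≤ g i) :
    ∑ᶠ i ∈ s, f i ≤ ∑ᶠ i ∈ s, g i := by
  rw [finsum_mem_eq_finite_toFinset_sum _ hs, finsum_mem_eq_finite_toFinset_sum _ hs]
  exact Finset.sum_le_sum fun i hi => h i (hs.mem_toFinset.1 hi)

end Finsum

lemma FinSupp.indicator {α β : Type*} [Zero β] {f : α → β} (hf : FinSupp f) (s : Set α) :
    FinSupp (s.indicator f) :=
  hf.subset (by rw [support_indicator]; exact inter_subset_right)

lemma support_mul_sq_subset {α R : Type*} [MonoidWithZero R] [NoZeroDivisors R] (w f : α → R) :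
    support (fun x => w x * f x ^ 2) ⊆ support f :=
  (support_mul_subset_right _ _).trans (support_pow f two_ne_zero).le

namespace WGraph

variable (G : WGraph V)

lemma finite_edges_snd_eq (v : V) : {e : V × V | e ∈ G.E ∧ e.2 = v}.Finite := by
  refine ((G.locfin v).image Prod.swap).subset ?_
  rintro ⟨a, b⟩ ⟨he, rfl⟩
  exact ⟨(b, a), ⟨G.symm _ he, rfl⟩, rfl⟩

lemma finite_E_inter_support_dOp {f : V → ℝ} (hf : FinSupp f) :
    (G.E ∩ support (dOp f)).Finite := by
  refine ((hf.biUnion fun v _ => G.locfin v).union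
    (hf.biUnion fun v _ => G.finite_edges_snd_eq v)).subset ?_
  rintro e ⟨he, hd⟩
  by_cases h1 : f e.1 = 0
  · have h2 : f e.2 ≠ 0 := fun h2 => hd (by simp [dOp, h1, h2])
    exact Or.inr (mem_biUnion h2 ⟨he, rfl⟩)
  · exact Or.inl (mem_biUnion h1 ⟨he, rfl⟩)

lemma finSupp_deltaOp {φ : V × V → ℝ} (hφ : FinSupp φ) : FinSupp (deltaOp G φ) := by
  refine (hφ.image Prod.snd).subset fun x hx => ?_
  by_contra hx'
  apply hx
  rw [deltaOp, finsum_mem_of_eqOn_zero, mul_zero]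
  intro e he
  have : φ e = 0 := by_contra fun h => hx' ⟨e, h, he.2⟩
  simp [this]

lemma finsum_mem_c_mul_sq_le_sqnormOn (S : Set V) (T : Set (V × V)) (f : V → ℝ)
    (φ : V × V → ℝ) : ∑ᶠ x ∈ S, G.c x * f x ^ 2 ≤ sqnormOn G S T f φ :=
  le_add_of_nonneg_right <| mul_nonneg (by norm_num) <|
    finsum_mem_nonneg_s9 fun e _ => mul_nonneg (G.rpos e).le (sq_nonneg _)

lemma sqnormOn_nonneg (S : Set V) (T : Set (V × V)) (f : V → ℝ) (φ : V × V → ℝ) :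
    0 ≤ sqnormOn G S T f φ :=
  (finsum_mem_nonneg_s9 fun x _ => mul_nonneg (G.cpos x).le (sq_nonneg _)).trans
    (G.finsum_mem_c_mul_sq_le_sqnormOn S T f φ)

lemma sqnormOn_add_sdiff {S S' : Set V} {T T' : Set (V × V)} (hS : S ⊆ S') (hT : T ⊆ T')
    {f : V → ℝ} {φ : V × V → ℝ} (hf : FinSupp f) (hφ : FinSupp φ) :
    sqnormOn G S T f φ + sqnormOn G (S' \ S) (T' \ T) f φ = sqnormOn G S' T' f φ := by
  simp only [sqnormOn]
  rw [← finsum_mem_add_sdiff' hS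
      (hf.subset (inter_subset_right.trans (support_mul_sq_subset _ _))),
    ← finsum_mem_add_sdiff' hT
      (hφ.subset (inter_subset_right.trans (support_mul_sq_subset _ _)))]
  ring

lemma sqnormOn_indicator_of_subset {S A : Set V} {T B : Set (V × V)} (hS : S ⊆ A) (hT : T ⊆ B)
    (f : V → ℝ) (φ : V × V → ℝ) :
    sqnormOn G S T (A.indicator f) (B.indicator φ) = sqnormOn G S T f φ := by
  unfold sqnormOn
  congr 1
  · exact finsum_mem_congr rfl fun x hx => by rw [indicator_of_mem (hS hx)]
  · congr 1
    exact finsum_mem_congr rfl fun e he => by rw [indicator_of_mem (hT he)]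

end WGraph

noncomputable def edgeBdryWeight (G : WGraph V) (K : Set V) : ℝ :=
  ∑ᶠ e ∈ edgeBdry G K, (G.r e / G.c e.1 + G.r e / G.c e.2)

section Cutoff

variable {G : WGraph V} (K : Set V)

lemma edgeBdryWeight_nonneg : 0 ≤ edgeBdryWeight G K :=
  finsum_mem_nonneg_s9 fun e _ =>
    add_nonneg (div_nonneg (G.rpos e).le (G.cpos _).le) (div_nonneg (G.rpos e).le (G.cpos _).le)

lemma swap_mem_E_sdiff_EK {e : V × V} (he : e ∈ G.E \ EK G K) : (e.2, e.1) ∈ G.E \ EK G K :=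
  ⟨G.symm e he.1, fun h => he.2 ⟨he.1, h.2.2, h.2.1⟩⟩

lemma Skew.indicator_E_sdiff_EK {φ : V × V → ℝ} (hφ : Skew φ) :
    Skew ((G.E \ EK G K).indicator φ) := by
  intro e
  by_cases he : e ∈ G.E \ EK G K
  · rw [indicator_of_mem (swap_mem_E_sdiff_EK K he), indicator_of_mem he, hφ]
  · have he' : (e.2, e.1) ∉ G.E \ EK G K := fun h => he (swap_mem_E_sdiff_EK K h)
    rw [indicator_of_notMem he', indicator_of_notMem he, neg_zero]

lemma deltaOp_indicator_E_sdiff_EK {x : V} (hx : x ∉ K) (φ : V × V → ℝ) :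
    deltaOp G ((G.E \ EK G K).indicator φ) x = deltaOp G φ x := by
  unfold deltaOp
  congr 1
  refine finsum_mem_congr rfl fun e he => ?_
  have he' : e ∈ G.E \ EK G K := ⟨he.1, fun h => hx (he.2 ▸ h.2.2)⟩
  rw [indicator_of_mem he']

lemma dOp_indicator_compl {e : V × V} (h1 : e.1 ∉ K) (h2 : e.2 ∉ K) (f : V → ℝ) :
    dOp (Kᶜ.indicator f) e = dOp f e := by
  simp [dOp, h1, h2]

lemma sq_dOp_indicator_compl_le {e : V × V} (he : e ∈ edgeBdry G K) (f : V → ℝ) :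
    dOp (Kᶜ.indicator f) e ^ 2 ≤ f e.1 ^ 2 + f e.2 ^ 2 := by
  rcases he.2 with ⟨h1, h2⟩ | ⟨h1, h2⟩ <;> simp [dOp, h1, h2] <;> positivity

lemma r_mul_sq_dOp_indicator_compl_le {S : Set V} (hS : S.Finite) {e : V × V}
    (he : e ∈ edgeBdry G K) (h1 : e.1 ∈ S) (h2 : e.2 ∈ S) (f : V → ℝ) :
    G.r e * dOp (Kᶜ.indicator f) e ^ 2 ≤
      (G.r e / G.c e.1 + G.r e / G.c e.2) * ∑ᶠ x ∈ S, G.c x * f x ^ 2 := by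
  have hle : ∀ x ∈ S, G.c x * f x ^ 2 ≤ ∑ᶠ x ∈ S, G.c x * f x ^ 2 := fun x hx => by
    simpa using finsum_mem_le_finsum_mem_of_subset (singleton_subset_iff.2 hx)
      (fun y _ => mul_nonneg (G.cpos y).le (sq_nonneg (f y))) (hS.inter_of_left _)
  have hr := G.rpos e
  have hc1 := G.cpos e.1
  have hc2 := G.cpos e.2
  calc G.r e * dOp (Kᶜ.indicator f) e ^ 2 ≤ G.r e * (f e.1 ^ 2 + f e.2 ^ 2) :=
        mul_le_mul_of_nonneg_left (sq_dOp_indicator_compl_le K he f) hr.le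
    _ = G.r e / G.c e.1 * (G.c e.1 * f e.1 ^ 2) + G.r e / G.c e.2 * (G.c e.2 * f e.2 ^ 2) := by
        field_simp
    _ ≤ _ := by
        rw [add_mul]
        gcongr
        exacts [hle _ h1, hle _ h2]

lemma finsum_E_sdiff_EK_dOp_indicator_compl_le {S : Set V} (hS : S.Finite)
    (hB : (edgeBdry G K).Finite) (hBS : ∀ e ∈ edgeBdry G K, e.1 ∈ S ∧ e.2 ∈ S)
    {f : V → ℝ} (hf : FinSupp f) :
    ∑ᶠ e ∈ G.E \ EK G K, G.r e * dOp (Kᶜ.indicator f) e ^ 2 ≤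
      ∑ᶠ e ∈ G.E, G.r e * dOp f e ^ 2 +
        edgeBdryWeight G K * ∑ᶠ x ∈ S, G.c x * f x ^ 2 := by
  set W : Set (V × V) := {e | e ∈ G.E ∧ e.1 ∉ K ∧ e.2 ∉ K}
  have hsplit : G.E \ EK G K = W ∪ edgeBdry G K := by
    ext e
    simp only [W, EK, edgeBdry, Set.mem_sdiff, mem_union, mem_ofPred_eq]
    tauto
  have hdisj : Disjoint W (edgeBdry G K) :=
    disjoint_left.2 fun e hW hB => hB.2.elim (fun h => hW.2.1 h.1) (fun h => hW.2.2 h.2)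
  have hW : (W ∩ support fun e => G.r e * dOp (Kᶜ.indicator f) e ^ 2).Finite :=
    (G.finite_E_inter_support_dOp (hf.indicator Kᶜ)).subset
      (inter_subset_inter (fun e he => he.1) (support_mul_sq_subset _ _))
  rw [hsplit, finsum_mem_union' hdisj hW (hB.inter_of_left _), edgeBdryWeight, finsum_mem_mul]
  gcongr ?_ + ?_
  · rw [finsum_mem_congr rfl fun e he => by rw [dOp_indicator_compl K he.2.1 he.2.2]]
    exact finsum_mem_le_finsum_mem_of_subset (fun e he => he.1)
      (fun e _ => mul_nonneg (G.rpos e).le (sq_nonneg _))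
      ((G.finite_E_inter_support_dOp hf).subset
        (inter_subset_inter_right _ (support_mul_sq_subset _ _)))
  · exact finsum_mem_le_finsum_mem hB fun e he =>
      r_mul_sq_dOp_indicator_compl_le K hS he (hBS e he).1 (hBS e he).2 f

lemma finsum_compl_deltaOp_indicator_le {φ : V × V → ℝ} (hφ : FinSupp φ) :
    ∑ᶠ x ∈ Kᶜ, G.c x * deltaOp G ((G.E \ EK G K).indicator φ) x ^ 2 ≤
      ∑ᶠ x ∈ univ, G.c x * deltaOp G φ x ^ 2 := by
  rw [finsum_mem_congr rfl fun x hx => by rw [deltaOp_indicator_E_sdiff_EK K hx]]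
  exact finsum_mem_le_finsum_mem_of_subset (subset_univ _)
    (fun x _ => mul_nonneg (G.cpos x).le (sq_nonneg _))
    ((G.finSupp_deltaOp hφ).subset (inter_subset_right.trans (support_mul_sq_subset _ _)))

end Cutoff

section Neighborhood

variable {G : WGraph V} {K Kt₀ Kt₁ : Set V} {Et₀ Et₁ : Set (V × V)}

lemma IsNbhd.sqnormOn_cutoff_le (h₀ : IsNbhd G K Kt₀ Et₀) {f : V → ℝ} {φ : V × V → ℝ}
    (hf : FinSupp f) (hφ : FinSupp φ) :
    sqnormOn G Kᶜ (G.E \ EK G K) (deltaOp G ((G.E \ EK G K).indicator φ))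
        (dOp (Kᶜ.indicator f)) ≤
      sqnormOn G univ G.E (deltaOp G φ) (dOp f) +
        edgeBdryWeight G K / 2 * sqnormOn G Kt₀ Et₀ f φ := by
  obtain ⟨hKt, hEt, -, hBEt, -, hEtKt⟩ := h₀
  have hB : edgeBdry G K ⊆ Et₀ := subset_union_right.trans hBEt
  have hV := finsum_compl_deltaOp_indicator_le (G := G) K hφ
  have hE := finsum_E_sdiff_EK_dOp_indicator_compl_le K hKt (hEt.subset hB)
    (fun e he => hEtKt e (hB he)) hf
  have hN := mul_le_mul_of_nonneg_left (G.finsum_mem_c_mul_sq_le_sqnormOn Kt₀ Et₀ f φ)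
    (edgeBdryWeight_nonneg (G := G) K)
  simp only [sqnormOn] at hN ⊢
  linarith

lemma IsNbhd.sdiff_subset_compl (h₀ : IsNbhd G K Kt₀ Et₀) (Kt₁ : Set V) :
    Kt₁ \ Kt₀ ⊆ Kᶜ :=
  fun _ hx hxK => hx.2 (h₀.2.2.1 hxK)

lemma IsNbhd.sdiff_subset_E_sdiff_EK (h₀ : IsNbhd G K Kt₀ Et₀) (h₁ : IsNbhd G K Kt₁ Et₁) :
    Et₁ \ Et₀ ⊆ G.E \ EK G K :=
  fun _ he => ⟨h₁.2.2.2.2.1 he.1, fun heK => he.2 (h₀.2.2.2.1 (Or.inl heK))⟩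

end Neighborhood

lemma NonParabolicAt.sq_mul_sqnormOn_le {G : WGraph V} {K : Set V} (hNP : NonParabolicAt G K)
    {VU : Set V} {EU : Set (V × V)} (hVU : VU.Finite) (hEU : EU.Finite)
    (hVUK : VU ⊆ Kᶜ) (hEUK : EU ⊆ G.E \ EK G K) :
    ∃ C > 0, ∀ f : V → ℝ, ∀ φ : V × V → ℝ, FinSupp f → FinSupp φ → Skew φ →
      C ^ 2 * sqnormOn G VU EU f φ ≤
        sqnormOn G Kᶜ (G.E \ EK G K) (deltaOp G ((G.E \ EK G K).indicator φ))
          (dOp (Kᶜ.indicator f)) := by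
  obtain ⟨C, hC, hNPC⟩ := hNP VU EU hVU hEU hVUK hEUK
  refine ⟨C, hC, fun f φ hf hφ hskew => ?_⟩
  have h := hNPC _ _ (hf.indicator _) (hφ.indicator _) (hskew.indicator_E_sdiff_EK K)
    support_indicator_subset support_indicator_subset
  rw [G.sqnormOn_indicator_of_subset hVUK hEUK, ← Real.sqrt_sq hC.le,
    ← Real.sqrt_mul (sq_nonneg C)] at h
  exact (Real.sqrt_le_sqrt_iff (G.sqnormOn_nonneg _ _ _ _)).1 h

lemma sqrt_add_add_le_sqrt_mul_sqrt {N X D M C : ℝ} (hN : 0 ≤ N) (hD : 0 ≤ D) (hM : 0 ≤ M)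
    (hC : 0 < C) (h : C ^ 2 * X ≤ D + M * N) :
    √(N + X + D) ≤ √(1 + (M + 1) / C ^ 2) * √(N + D) := by
  rw [← Real.sqrt_mul (by positivity)]
  refine Real.sqrt_le_sqrt ?_
  have hX : X ≤ (D + M * N) / C ^ 2 := by
    rw [le_div_iff₀ (by positivity)]
    linarith
  have hMN : (D + M * N) / C ^ 2 ≤ (M + 1) / C ^ 2 * (N + D) := by
    rw [div_mul_eq_mul_div]
    gcongr
    nlinarith
  linarith

theorem stmt9_general (G : WGraph V) (K : Set V) (hNP : NonParabolicAt G K) (Kt0 Kt1 : Set V)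
    (Et0 Et1 : Set (V × V)) (h0 : IsNbhd G K Kt0 Et0) (h1 : IsNbhd G K Kt1 Et1)
    (hsubV : Kt0 ⊆ Kt1) (hsubE : Et0 ⊆ Et1) :
    ∃ C > 0, ∀ f : V → ℝ, ∀ φ : V × V → ℝ,
      FinSupp f → FinSupp φ → Skew φ → Function.support φ ⊆ G.E →
      Real.sqrt (sqnormOn G Kt0 Et0 f φ +
          sqnormOn G Set.univ G.E (deltaOp G φ) (dOp f)) ≤
        Real.sqrt (sqnormOn G Kt1 Et1 f φ +
          sqnormOn G Set.univ G.E (deltaOp G φ) (dOp f)) ∧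
      Real.sqrt (sqnormOn G Kt1 Et1 f φ +
          sqnormOn G Set.univ G.E (deltaOp G φ) (dOp f)) ≤
        C * Real.sqrt (sqnormOn G Kt0 Et0 f φ +
          sqnormOn G Set.univ G.E (deltaOp G φ) (dOp f)) := by
  have hM : 0 ≤ edgeBdryWeight G K / 2 := div_nonneg (edgeBdryWeight_nonneg K) zero_le_two
  obtain ⟨C, hC, hX⟩ := hNP.sq_mul_sqnormOn_le (h1.1.sdiff (t := Kt0)) (h1.2.1.sdiff (t := Et0))
    (h0.sdiff_subset_compl Kt1) (h0.sdiff_subset_E_sdiff_EK h1)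
  refine ⟨√(1 + (edgeBdryWeight G K / 2 + 1) / C ^ 2), Real.sqrt_pos.2 (by positivity),
    fun f φ hf hφ hskew _ => ?_⟩
  rw [← G.sqnormOn_add_sdiff hsubV hsubE hf hφ]
  have hN₀ := G.sqnormOn_nonneg Kt0 Et0 f φ
  have hD := G.sqnormOn_nonneg univ G.E (deltaOp G φ) (dOp f)
  exact ⟨Real.sqrt_le_sqrt (by linarith [G.sqnormOn_nonneg (Kt1 \ Kt0) (Et1 \ Et0) f φ]),
    sqrt_add_add_le_sqrt_mul_sqrt hN₀ hD hM hC
      ((hX f φ hf hφ hskew).trans (h0.sqnormOn_cutoff_le hf hφ))⟩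

/-- equivalence of the norms associated to two neighborhoods. -/
theorem stmt9 (G : WGraph V) [Infinite V] (hconn : G.Connected) (K : Set V)
    (hK : K.Finite) (hNP : NonParabolicAt G K) (Kt0 Kt1 : Set V)
    (Et0 Et1 : Set (V × V)) (h0 : IsNbhd G K Kt0 Et0) (h1 : IsNbhd G K Kt1 Et1)
    (hsubV : Kt0 ⊆ Kt1) (hsubE : Et0 ⊆ Et1) :
    ∃ C > 0, ∀ f : V → ℝ, ∀ φ : V × V → ℝ,
      FinSupp f → FinSupp φ → Skew φ → Function.support φ ⊆ G.E →
      Real.sqrt (sqnormOn G Kt0 Et0 f φ +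
          sqnormOn G Set.univ G.E (deltaOp G φ) (dOp f)) ≤
        Real.sqrt (sqnormOn G Kt1 Et1 f φ +
          sqnormOn G Set.univ G.E (deltaOp G φ) (dOp f)) ∧
      Real.sqrt (sqnormOn G Kt1 Et1 f φ +
          sqnormOn G Set.univ G.E (deltaOp G φ) (dOp f)) ≤
        C * Real.sqrt (sqnormOn G Kt0 Et0 f φ +
          sqnormOn G Set.univ G.E (deltaOp G φ) (dOp f)) :=
  stmt9_general G K hNP Kt0 Kt1 Et0 Et1 h0 h1 hsubV hsubE
end
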